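/- Let Q ⊂ ℝ^{N+1} be a bounded measurable set and let s, p : Q → ℝ be measurable with 0 < s⁻ ≤ s(z) ≤ s⁺ < ∞ and 1 < p⁻ ≤ p(z) ≤ p⁺ < ∞ for a.e. z ∈ Q. Then for every measurable f : Q → ℝ one has ‖ χ_{{z ∈ Q : |f(z)| > 1}} · |f|^{s(·)} ‖_{L^{p(·),∞}(Q)} ≤ ‖f‖_{L^{s⁺·p(·),∞}(Q)}^{s⁺}, where |f|^{s(·)} denotes the function z ↦ |f(z)|^{s(z)}. -/

import Mathlib

open MeasureTheory ENNReal

/-- The Luxemburg norm of `u` on `E` with variable exponent `p`,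
with the convention `inf ∅ = +∞`. -/
noncomputable def luxNorm {n : ℕ} (E : Set (Fin n → ℝ)) (p u : (Fin n → ℝ) → ℝ) : ℝ≥0∞ :=
  sInf ((fun lr : ℝ => ENNReal.ofReal lr) ''
    {lr : ℝ | 0 < lr ∧ ∫⁻ x in E, ENNReal.ofReal (|u x| / lr) ^ p x ≤ 1})

/-- The variable-exponent weak (Marcinkiewicz) norm
`‖f‖_{L^{p(·),∞}(E)} = sup_{λ>0} λ ‖χ_{{|f|>λ}}‖_{L^{p(·)}(E)}`. -/
noncomputable def weakLuxNorm {n : ℕ} (E : Set (Fin n → ℝ)) (p f : (Fin n → ℝ) → ℝ) : ℝ≥0∞ :=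
  ⨆ (l : ℝ) (_ : 0 < l),
    ENNReal.ofReal l * luxNorm E p (Set.indicator {x | l < |f x|} fun _ => 1)

lemma luxNorm_of_null {n : ℕ} (E : Set (Fin n → ℝ)) (p u : (Fin n → ℝ) → ℝ)
    (h : volume E = 0) : luxNorm E p u = 0 := by
  have : luxNorm E p u = ⊥ := by
    apply sInf_eq_bot.mpr
    intro b hb
    obtain ⟨c, hc0, hcb⟩ := exists_between hb
    refine ⟨c, ⟨c.toReal, ⟨?_, ?_⟩, ?_⟩, hcb⟩
    · exact ENNReal.toReal_pos hc0.ne' (hcb.trans_le le_top).ne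
    · rw [setLIntegral_measure_zero _ _ h]; exact zero_le_one
    · exact ENNReal.ofReal_toReal (hcb.trans_le le_top).ne
  simpa using this

lemma luxNorm_indicator_mono {n : ℕ} (E : Set (Fin n → ℝ)) (p : (Fin n → ℝ) → ℝ)
    (A B : Set (Fin n → ℝ))
    (hAB : ∀ᵐ z ∂(volume.restrict E), z ∈ A → z ∈ B)
    (hppos : ∀ᵐ z ∂(volume.restrict E), 0 < p z) :
    luxNorm E p (A.indicator fun _ => 1) ≤ luxNorm E p (B.indicator fun _ => 1) := by
  apply sInf_le_sInf (Set.image_mono ?_)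
  rintro lr ⟨h1, h2⟩
  refine ⟨h1, le_trans (lintegral_mono_ae ?_) h2⟩
  filter_upwards [hAB, hppos] with z hz hpz
  by_cases hzA : z ∈ A
  · rw [Set.indicator_of_mem hzA, Set.indicator_of_mem (hz hzA)]
  · rw [Set.indicator_of_notMem hzA]
    simp only [abs_zero, zero_div, ENNReal.ofReal_zero]
    rw [ENNReal.zero_rpow_of_pos hpz]
    exact zero_le

lemma luxNorm_indicator_rpow {n : ℕ} (E : Set (Fin n → ℝ)) (p : (Fin n → ℝ) → ℝ)
    (B : Set (Fin n → ℝ)) (c : ℝ) (hc : 0 < c)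
    (hppos : ∀ᵐ z ∂(volume.restrict E), 0 < p z) :
    luxNorm E p (B.indicator fun _ => 1) ≤
      luxNorm E (fun z => c * p z) (B.indicator fun _ => 1) ^ c := by
  have key : luxNorm E (fun z => c * p z) (B.indicator fun _ => 1) ^ c
      = ⨅ a ∈ ((fun lr : ℝ => ENNReal.ofReal lr) ''
        {lr : ℝ | 0 < lr ∧
          ∫⁻ x in E, ENNReal.ofReal (|B.indicator (fun _ => (1:ℝ)) x| / lr) ^ (c * p x) ≤ 1}),
        a ^ c := by
    exact (ENNReal.orderIsoRpow c hc).map_sInf _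
  rw [key]
  refine le_iInf₂ fun a ha => ?_
  obtain ⟨lr, ⟨hlr, hint⟩, rfl⟩ := ha
  show luxNorm E p (B.indicator fun _ => 1) ≤ ENNReal.ofReal lr ^ c
  rw [ENNReal.ofReal_rpow_of_pos hlr]
  apply sInf_le
  refine ⟨lr ^ c, ⟨Real.rpow_pos_of_pos hlr c, ?_⟩, rfl⟩
  refine le_trans (le_of_eq (lintegral_congr_ae ?_)) hint
  filter_upwards [hppos] with z hpz
  by_cases hzB : z ∈ B
  · rw [Set.indicator_of_mem hzB]
    have h1 : |(1:ℝ)| / lr ^ c = (|(1:ℝ)| / lr) ^ c := by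
      rw [abs_one, ← Real.one_rpow c, ← Real.div_rpow zero_le_one hlr.le, Real.one_rpow]
    rw [h1, ← ENNReal.ofReal_rpow_of_nonneg (by positivity) hc.le, ← ENNReal.rpow_mul]
  · rw [Set.indicator_of_notMem hzB]
    simp only [abs_zero, zero_div, ENNReal.ofReal_zero]
    rw [ENNReal.zero_rpow_of_pos hpz, ENNReal.zero_rpow_of_pos (by positivity)]


theorem weak_norm_power_estimate_large_part {N : ℕ} (Q : Set (Fin (N + 1) → ℝ))
    (hQm : MeasurableSet Q) (hQb : Bornology.IsBounded Q)
    (s p : (Fin (N + 1) → ℝ) → ℝ) (hs : Measurable s) (hp : Measurable p)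
    (sm sM pm pM : ℝ) (hsm : 0 < sm) (hpm : 1 < pm)
    (hsae : ∀ᵐ z ∂(volume.restrict Q), sm ≤ s z ∧ s z ≤ sM)
    (hpae : ∀ᵐ z ∂(volume.restrict Q), pm ≤ p z ∧ p z ≤ pM)
    (f : (Fin (N + 1) → ℝ) → ℝ) (hf : Measurable f) :
    weakLuxNorm Q p (Set.indicator {z | 1 < |f z|} fun z => |f z| ^ s z) ≤
      weakLuxNorm Q (fun z => sM * p z) f ^ sM := by
  by_cases hQ0 : volume Q = 0
  · have : weakLuxNorm Q p (Set.indicator {z | 1 < |f z|} fun z => |f z| ^ s z) = 0 := by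
      simp [weakLuxNorm, luxNorm_of_null _ _ _ hQ0]
    rw [this]; exact zero_le
  · haveI : (MeasureTheory.ae (volume.restrict Q)).NeBot := by
      rw [ae_neBot]
      simpa [Measure.restrict_eq_zero] using hQ0
    obtain ⟨z0, hz0⟩ := hsae.exists
    have hsM : 0 < sM := hsm.trans_le (hz0.1.trans hz0.2)
    have hppos : ∀ᵐ z ∂(volume.restrict Q), 0 < p z :=
      hpae.mono fun z h => lt_of_lt_of_le (zero_lt_one.trans hpm) h.1
    conv_lhs => rw [weakLuxNorm]
    refine iSup_le fun l => iSup_le fun hl => ?_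
    set μl := max (l ^ (1 / sM)) 1 with hμdef
    have hμ : 0 < μl := lt_of_lt_of_le one_pos (le_max_right _ _)
    have hsub : ∀ᵐ z ∂(volume.restrict Q),
        z ∈ {x | l < |Set.indicator {z | 1 < |f z|} (fun z => |f z| ^ s z) x|} →
          z ∈ {x | μl < |f x|} := by
      filter_upwards [hsae] with z hz hzA
      replace hzA : l < |Set.indicator {z | 1 < |f z|} (fun z => |f z| ^ s z) z| := hzA
      show μl < |f z|
      by_cases h1 : (1:ℝ) < |f z|
      · rw [Set.indicator_of_mem (show z ∈ {z | 1 < |f z|} from h1)] at hzA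
        have hbase : (0:ℝ) < |f z| := lt_trans one_pos h1
        rw [abs_of_pos (Real.rpow_pos_of_pos hbase _)] at hzA
        have h2 : l < |f z| ^ sM :=
          lt_of_lt_of_le hzA (Real.rpow_le_rpow_of_exponent_le h1.le hz.2)
        have h3 : l ^ (1 / sM) < |f z| := by
          have h4 := Real.rpow_lt_rpow hl.le h2 (by positivity : (0:ℝ) < 1 / sM)
          rwa [← Real.rpow_mul (abs_nonneg _), mul_one_div_cancel hsM.ne',
            Real.rpow_one] at h4
        exact max_lt h3 h1
      · rw [Set.indicator_of_notMem (show z ∉ {z | 1 < |f z|} from h1)] at hzA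
        simp only [abs_zero] at hzA
        linarith
    have hlμ : l ≤ μl ^ sM := by
      have : (l ^ (1 / sM)) ^ sM ≤ μl ^ sM :=
        Real.rpow_le_rpow (Real.rpow_nonneg hl.le _) (le_max_left _ _) hsM.le
      rwa [← Real.rpow_mul hl.le, one_div_mul_cancel hsM.ne', Real.rpow_one] at this
    calc ENNReal.ofReal l * luxNorm Q p
          (Set.indicator {x | l < |Set.indicator {z | 1 < |f z|}
            (fun z => |f z| ^ s z) x|} fun _ => 1)
        ≤ ENNReal.ofReal l * luxNorm Q p (Set.indicator {x | μl < |f x|} fun _ => 1) :=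
          mul_le_mul_right (luxNorm_indicator_mono _ _ _ _ hsub hppos) _
      _ ≤ ENNReal.ofReal (μl ^ sM) *
            (luxNorm Q (fun z => sM * p z) (Set.indicator {x | μl < |f x|} fun _ => 1) ^ sM) :=
          mul_le_mul' (ENNReal.ofReal_le_ofReal hlμ)
            (luxNorm_indicator_rpow _ _ _ _ hsM hppos)
      _ = (ENNReal.ofReal μl *
            luxNorm Q (fun z => sM * p z) (Set.indicator {x | μl < |f x|} fun _ => 1)) ^ sM := by
          rw [ENNReal.mul_rpow_of_nonneg _ _ hsM.le, ENNReal.ofReal_rpow_of_pos hμ]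
      _ ≤ weakLuxNorm Q (fun z => sM * p z) f ^ sM := by
          refine ENNReal.rpow_le_rpow ?_ hsM.le
          rw [weakLuxNorm]
          exact le_iSup_of_le μl (le_iSup_of_le hμ le_rfl)
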